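/- Let d ≥ 1, k ≥ 0, and m ≥ 0 be integers, with the additional constraint that m = 0 if k = 0. Then for all finite sets Ĉ_1, Ĉ_2 ⊆ ℝ^d, we have ψ^max_{d,k+2}(m + |Ĉ_1| + |Ĉ_2|) ≥ ψ̂_k(Ĉ_1, Ĉ_2) · ψ^max_{d,k}(m). -/

import Mathlib

/-- `sumDist V x = Σ_{v ∈ V} ‖x − v‖` (with multiplicity): the sum of Euclidean
distances from `x` to the points of the multiset `V`. -/
noncomputable def sumDist {d : ℕ} (V : Multiset (EuclideanSpace ℝ (Fin d)))
    (x : EuclideanSpace ℝ (Fin d)) : ℝ :=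
  (V.map fun v => dist x v).sum

/-- `PsiSet k n C` is the set of orderings `Σ_V^C` of the `n`-element set `C ⊆ ℝ^d`,
recorded as injective enumerations `σ : Fin n → ℝ^d` of `C`, witnessed by some
`k`-element multiset `V` of vantage points which distinguishes the points of `C`
(i.e. `D_V` is injective on `C`) and along which `D_V` is strictly increasing. -/
def PsiSet {d : ℕ} (k n : ℕ) (C : Finset (EuclideanSpace ℝ (Fin d))) :
    Set (Fin n → EuclideanSpace ℝ (Fin d)) :=
  {σ | Function.Injective σ ∧ (∀ i, σ i ∈ C) ∧
    ∃ V : Multiset (EuclideanSpace ℝ (Fin d)), Multiset.card V = k ∧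
      Set.InjOn (sumDist V) ↑C ∧ StrictMono fun i => sumDist V (σ i)}

/-- `ψ_k(C)`, the number of orderings of `C` witnessed by `k`-element multisets. -/
noncomputable def psiCount {d : ℕ} (k : ℕ) (C : Finset (EuclideanSpace ℝ (Fin d))) : ℕ :=
  Nat.card (PsiSet k C.card C)

/-- `ψ^max_{d,k}(n)`: the maximum of `ψ_k(C)` over all `n`-element sets `C ⊆ ℝ^d`. -/
noncomputable def psiMax (d k n : ℕ) : ℕ :=
  sSup {m | ∃ C : Finset (EuclideanSpace ℝ (Fin d)), C.card = n ∧ psiCount k C = m}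

/-- The effective distance function `D̂_{k,Û}` on the disjoint union `ℝ^d ⊔ ℝ^d`
(left summand for points of `Ĉ_1`, right summand for points of `Ĉ_2`):
`D̂¹_{k,Û}(ĉ) = ‖ĉ − û_1‖ + ((k+1)ĉ + û_2)·e_1` on the left and
`D̂²_{k,Û}(ĉ) = ‖ĉ − û_2‖ + ((k+1)ĉ + û_1)·e_1` on the right, where `e_1` is the
first standard basis vector (so `v·e_1` is the first coordinate of `v`). -/
noncomputable def Dhat {d : ℕ} (hd : 0 < d) (k : ℕ)
    (U : EuclideanSpace ℝ (Fin d) × EuclideanSpace ℝ (Fin d)) :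
    EuclideanSpace ℝ (Fin d) ⊕ EuclideanSpace ℝ (Fin d) → ℝ
  | Sum.inl c => dist c U.1 + (((k : ℝ) + 1) * c ⟨0, hd⟩ + U.2 ⟨0, hd⟩)
  | Sum.inr c => dist c U.2 + (((k : ℝ) + 1) * c ⟨0, hd⟩ + U.1 ⟨0, hd⟩)

/-- `Ψ̂_k(Ĉ_1, Ĉ_2)`: the set of orderings of the disjoint union `Ĉ_1 ⊔ Ĉ_2`
(encoded as injective enumerations `σ : Fin n → ℝ^d ⊕ ℝ^d`, left components lying in
`Ĉ_1` and right components in `Ĉ_2`) along which `D̂_{k,Û}` is strictly increasing,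
for some pair `Û ∈ ℝ^d × ℝ^d`. -/
def PsiHatSet {d : ℕ} (hd : 0 < d) (k n : ℕ)
    (C₁ C₂ : Finset (EuclideanSpace ℝ (Fin d))) :
    Set (Fin n → (EuclideanSpace ℝ (Fin d) ⊕ EuclideanSpace ℝ (Fin d))) :=
  {σ | Function.Injective σ ∧
    (∀ i, Sum.elim (fun c => c ∈ C₁) (fun c => c ∈ C₂) (σ i)) ∧
    ∃ U : EuclideanSpace ℝ (Fin d) × EuclideanSpace ℝ (Fin d),
      StrictMono fun i => Dhat hd k U (σ i)}

/-- `ψ̂_k(Ĉ_1, Ĉ_2) = |Ψ̂_k(Ĉ_1, Ĉ_2)|`. -/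
noncomputable def psiHat {d : ℕ} (hd : 0 < d) (k : ℕ)
    (C₁ C₂ : Finset (EuclideanSpace ℝ (Fin d))) : ℕ :=
  Nat.card (PsiHatSet hd k (C₁.card + C₂.card) C₁ C₂)


/-! ### Auxiliary machinery for the proof -/

open Filter Topology RealInnerProductSpace

namespace PsiAuxProof

variable {d : ℕ}

noncomputable def e1 (hd : 0 < d) : EuclideanSpace ℝ (Fin d) := EuclideanSpace.single ⟨0, hd⟩ 1

lemma norm_e1 (hd : 0 < d) : ‖e1 hd‖ = 1 := by simp [e1]

lemma e1_apply (hd : 0 < d) : e1 hd ⟨0,hd⟩ = 1 := by simp [e1]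

lemma inner_e1 (hd : 0 < d) (w : EuclideanSpace ℝ (Fin d)) : ⟪w, e1 hd⟫ = w ⟨0,hd⟩ := by
  simp [e1, EuclideanSpace.inner_single_right]

lemma tendsto_coord (hd : 0 < d) (w : EuclideanSpace ℝ (Fin d)) {α : Type*} {l : Filter α}
    (g : α → EuclideanSpace ℝ (Fin d)) (hg : Tendsto g l (nhds w)) :
    Tendsto (fun t => g t ⟨0,hd⟩) l (nhds (w ⟨0,hd⟩)) :=
  ((EuclideanSpace.proj (⟨0,hd⟩ : Fin d)).continuous.tendsto w).comp hg

lemma tendsto_norm_add_smul (hd : 0 < d) (w : EuclideanSpace ℝ (Fin d)) (g : ℝ → EuclideanSpace ℝ (Fin d))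
    (hg : Tendsto g atTop (nhds w)) (B : ℝ → ℝ) (hB : Tendsto B atTop atTop) :
    Tendsto (fun t => ‖g t + B t • e1 hd‖ - B t) atTop (nhds (w ⟨0,hd⟩)) := by
  have hBpos : ∀ᶠ t in atTop, 0 < B t := hB.eventually_gt_atTop 0
  have heq : ∀ᶠ t in atTop,
      ‖g t + B t • e1 hd‖ - B t
        = (‖g t‖^2 / B t + 2 * (g t ⟨0,hd⟩)) / (‖(B t)⁻¹ • g t + e1 hd‖ + 1) := by
    filter_upwards [hBpos] with t ht
    have hBne : B t ≠ 0 := ne_of_gt ht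
    have h3 : ‖(B t)⁻¹ • g t + e1 hd‖ = ‖g t + B t • e1 hd‖ / B t := by
      rw [eq_div_iff hBne]
      have : (B t) • ((B t)⁻¹ • g t + e1 hd) = g t + B t • e1 hd := by
        rw [smul_add, smul_inv_smul₀ hBne]
      rw [← this, norm_smul, Real.norm_eq_abs, abs_of_pos ht, mul_comm]
    have hN : 0 ≤ ‖g t + B t • e1 hd‖ := norm_nonneg _
    have h2 : ‖g t + B t • e1 hd‖^2 = ‖g t‖^2 + 2*(B t)*(g t ⟨0,hd⟩) + (B t)^2 := by
      rw [norm_add_sq_real, real_inner_smul_right, inner_e1, norm_smul, Real.norm_eq_abs,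
        abs_of_pos ht, norm_e1]
      ring
    have hpos2 : 0 < ‖g t + B t • e1 hd‖ / B t + 1 := by positivity
    rw [h3, eq_div_iff (ne_of_gt hpos2)]
    field_simp
    nlinarith [h2]
  rw [tendsto_congr' heq]
  have l1 : Tendsto (fun t => ‖g t‖^2 / B t + 2 * (g t ⟨0,hd⟩)) atTop (nhds (0 + 2 * w ⟨0,hd⟩)) := by
    exact (((hg.norm.pow 2)).div_atTop hB).add ((tendsto_coord hd w g hg).const_mul 2)
  have l2 : Tendsto (fun t => ‖(B t)⁻¹ • g t + e1 hd‖ + 1) atTop (nhds (1 + 1)) := by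
    have h0 : Tendsto (fun t => (B t)⁻¹ • g t) atTop (nhds ((0:ℝ) • w)) :=
      Tendsto.smul hB.inv_tendsto_atTop hg
    rw [zero_smul] at h0
    have : Tendsto (fun t => (B t)⁻¹ • g t + e1 hd) atTop (nhds (0 + e1 hd)) :=
      h0.add tendsto_const_nhds
    rw [zero_add] at this
    simpa [norm_e1] using this.norm.add tendsto_const_nhds
  have := l1.div l2 (by norm_num)
  convert this using 2
  norm_num
  ring

lemma tendsto_sq_atTop : Tendsto (fun t : ℝ => t^2) atTop atTop :=
  tendsto_pow_atTop two_ne_zero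

lemma tendsto_inv_smul (a : EuclideanSpace ℝ (Fin d)) :
    Tendsto (fun t : ℝ => t⁻¹ • a) atTop (nhds 0) := by
  have h : Tendsto (fun t : ℝ => t⁻¹) atTop (nhds 0) := tendsto_inv_atTop_zero
  simpa using h.smul_const a

lemma tendsto_cross (hd : 0 < d) (a b u : EuclideanSpace ℝ (Fin d)) :
    Tendsto (fun t => t * (‖t⁻¹ • a + u + t^2 • e1 hd‖ - ‖t⁻¹ • b + u + t^2 • e1 hd‖)) atTop
      (nhds (a ⟨0,hd⟩ - b ⟨0,hd⟩)) := by
  set X : ℝ → EuclideanSpace ℝ (Fin d) := fun t => t⁻¹ • a + u + t^2 • e1 hd with hX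
  set Y : ℝ → EuclideanSpace ℝ (Fin d) := fun t => t⁻¹ • b + u + t^2 • e1 hd with hY
  have hga : Tendsto (fun t : ℝ => t⁻¹ • a + u) atTop (nhds u) := by
    simpa using (tendsto_inv_smul a).add (tendsto_const_nhds (α := ℝ) (x := u))
  have hgb : Tendsto (fun t : ℝ => t⁻¹ • b + u) atTop (nhds u) := by
    simpa using (tendsto_inv_smul b).add (tendsto_const_nhds (α := ℝ) (x := u))
  have NX : Tendsto (fun t => ‖X t‖ - t^2) atTop (nhds (u ⟨0,hd⟩)) :=
    tendsto_norm_add_smul hd u _ hga _ tendsto_sq_atTop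
  have NY : Tendsto (fun t => ‖Y t‖ - t^2) atTop (nhds (u ⟨0,hd⟩)) :=
    tendsto_norm_add_smul hd u _ hgb _ tendsto_sq_atTop
  have hXtop : Tendsto (fun t => ‖X t‖) atTop atTop :=
    (NX.add_atTop tendsto_sq_atTop).congr (fun t => by ring)
  have hinv2 : Tendsto (fun t : ℝ => (2 * t^2)⁻¹) atTop (nhds 0) :=
    (tendsto_sq_atTop.const_mul_atTop two_pos).inv_tendsto_atTop
  have hden : Tendsto (fun t => (‖X t‖ + ‖Y t‖) / (2 * t^2)) atTop (nhds 1) := by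
    have h1 : Tendsto (fun t => ((‖X t‖ - t^2) + (‖Y t‖ - t^2)) * (2 * t^2)⁻¹ + 1) atTop
        (nhds ((u ⟨0,hd⟩ + u ⟨0,hd⟩) * 0 + 1)) := ((NX.add NY).mul hinv2).add tendsto_const_nhds
    rw [show (u ⟨0,hd⟩ + u ⟨0,hd⟩) * 0 + 1 = (1:ℝ) by ring] at h1
    apply h1.congr'
    filter_upwards [eventually_gt_atTop (0:ℝ)] with t ht
    have h2 : (2 * t^2) ≠ 0 := by positivity
    field_simp
    ring
  have hnum : Tendsto (fun t : ℝ => (⟪(t⁻¹ • (a + b) + (2:ℝ) • u : EuclideanSpace ℝ (Fin d)), a - b⟫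
      + 2 * t^2 * (a ⟨0,hd⟩ - b ⟨0,hd⟩)) / (2 * t^2)) atTop (nhds (a ⟨0,hd⟩ - b ⟨0,hd⟩)) := by
    have hc : Tendsto (fun t : ℝ => (⟪(t⁻¹ • (a + b) + (2:ℝ) • u : EuclideanSpace ℝ (Fin d)), a - b⟫ : ℝ))
        atTop (nhds ⟪((2:ℝ) • u : EuclideanSpace ℝ (Fin d)), a - b⟫) := by
      apply Tendsto.inner ?_ tendsto_const_nhds
      simpa using (tendsto_inv_smul (a + b)).add (tendsto_const_nhds (α := ℝ)
        (x := ((2:ℝ) • u : EuclideanSpace ℝ (Fin d))))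
    have h1 := (hc.mul hinv2).add (tendsto_const_nhds (α := ℝ) (x := a ⟨0,hd⟩ - b ⟨0,hd⟩))
    rw [mul_zero, zero_add] at h1
    apply h1.congr'
    filter_upwards [eventually_gt_atTop (0:ℝ)] with t ht
    have h2 : (2 * t^2) ≠ 0 := by positivity
    field_simp
  have key := hnum.div hden one_ne_zero
  rw [div_one] at key
  apply key.congr'
  filter_upwards [eventually_gt_atTop (0:ℝ), hXtop.eventually_gt_atTop 0] with t ht hx
  have htne : t ≠ 0 := ne_of_gt ht
  have h2 : (2 * t^2) ≠ 0 := by positivity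
  have hdenpos : 0 < ‖X t‖ + ‖Y t‖ := by
    have := norm_nonneg (Y t); linarith
  have hXY : X t - Y t = t⁻¹ • (a - b) := by
    simp only [hX, hY]; module
  have hXYadd : X t + Y t = (t⁻¹ • (a + b) + (2:ℝ) • u) + (2 * t^2) • e1 hd := by
    simp only [hX, hY]; module
  have hsq : ‖X t‖^2 - ‖Y t‖^2 = ⟪X t + Y t, X t - Y t⟫ := by
    simp only [inner_sub_right, inner_add_left, real_inner_self_eq_norm_sq]
    have c1 : ⟪X t, Y t⟫ = ⟪Y t, X t⟫ := real_inner_comm _ _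
    linarith [c1]
  have hinner : ⟪X t + Y t, X t - Y t⟫
      = t⁻¹ * (⟪(t⁻¹ • (a + b) + (2:ℝ) • u : EuclideanSpace ℝ (Fin d)), a - b⟫
        + 2 * t^2 * (a ⟨0,hd⟩ - b ⟨0,hd⟩)) := by
    rw [hXY, hXYadd, real_inner_smul_right, inner_add_left, real_inner_smul_left]
    have h4 : ⟪e1 hd, a - b⟫ = (a - b) ⟨0,hd⟩ := by rw [real_inner_comm, inner_e1]
    rw [h4]
    have hab : (a - b) ⟨0,hd⟩ = a ⟨0,hd⟩ - b ⟨0,hd⟩ := rfl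
    rw [hab]; try ring
  simp only [Pi.div_apply]
  change _ = t * (‖X t‖ - ‖Y t‖)
  rw [div_div_div_cancel_right₀]
  · rw [div_eq_iff (ne_of_gt hdenpos)]
    calc (⟪(t⁻¹ • (a + b) + (2:ℝ) • u : EuclideanSpace ℝ (Fin d)), a - b⟫
          + 2 * t^2 * (a ⟨0,hd⟩ - b ⟨0,hd⟩))
        = t * (t⁻¹ * (⟪(t⁻¹ • (a + b) + (2:ℝ) • u : EuclideanSpace ℝ (Fin d)), a - b⟫
          + 2 * t^2 * (a ⟨0,hd⟩ - b ⟨0,hd⟩))) := by field_simp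
      _ = t * ⟪X t + Y t, X t - Y t⟫ := by rw [← hinner]
      _ = t * (‖X t‖^2 - ‖Y t‖^2) := by rw [← hsq]
      _ = t * (‖X t‖ - ‖Y t‖) * (‖X t‖ + ‖Y t‖) := by ring
  · exact h2

noncomputable def refl1 (hd : 0 < d) (c : EuclideanSpace ℝ (Fin d)) : EuclideanSpace ℝ (Fin d) :=
  c - (2 * c ⟨0,hd⟩) • e1 hd

lemma refl1_coord (hd : 0 < d) (c : EuclideanSpace ℝ (Fin d)) :
    refl1 hd c ⟨0,hd⟩ = - c ⟨0,hd⟩ := by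
  have h1 : refl1 hd c ⟨0,hd⟩ = c ⟨0,hd⟩ - (2 * c ⟨0,hd⟩) * (e1 hd ⟨0,hd⟩) := rfl
  rw [h1, e1_apply]; ring

lemma norm_refl_aux (hd : 0 < d) (w : EuclideanSpace ℝ (Fin d)) :
    ‖w - (2 * w ⟨0,hd⟩) • e1 hd‖ = ‖w‖ := by
  have h : ‖w - (2 * w ⟨0,hd⟩) • e1 hd‖^2 = ‖w‖^2 := by
    rw [norm_sub_sq_real, real_inner_smul_right, inner_e1, norm_smul, Real.norm_eq_abs, norm_e1]
    have h5 : |2 * w ⟨0,hd⟩| ^2 = (2 * w ⟨0,hd⟩)^2 := sq_abs _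
    nlinarith [h5]
  nlinarith [norm_nonneg (w - (2 * w ⟨0,hd⟩) • e1 hd), norm_nonneg w, h]

lemma dist_refl1 (hd : 0 < d) (x y : EuclideanSpace ℝ (Fin d)) :
    dist (refl1 hd x) (refl1 hd y) = dist x y := by
  have h : refl1 hd x - refl1 hd y = (x - y) - (2 * (x - y) ⟨0,hd⟩) • e1 hd := by
    have hxy : (x - y) ⟨0,hd⟩ = x ⟨0,hd⟩ - y ⟨0,hd⟩ := rfl
    simp only [refl1, hxy]
    module
  rw [dist_eq_norm, dist_eq_norm, h, norm_refl_aux]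

lemma refl1_injective (hd : 0 < d) : Function.Injective (refl1 hd) := by
  intro x y h
  have h6 := dist_refl1 hd x y
  rw [h, dist_self] at h6
  exact dist_eq_zero.mp h6.symm

lemma tendsto_msum {α : Type*} (V : Multiset α) (f : α → ℝ → ℝ) (L : α → ℝ)
    (h : ∀ v ∈ V, Tendsto (fun t => f v t) atTop (nhds (L v))) :
    Tendsto (fun t => ((V.map (fun v => f v t)).sum)) atTop (nhds ((V.map L).sum)) := by
  induction V using Multiset.induction_on with
  | empty => simpa using (tendsto_const_nhds : Tendsto (fun _ : ℝ => (0:ℝ)) atTop _)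
  | cons v V ih =>
      simp only [Multiset.map_cons, Multiset.sum_cons]
      exact (h v (Multiset.mem_cons_self _ _)).add (ih fun w hw => h w (Multiset.mem_cons_of_mem hw))

lemma msum_map_sub_const {α : Type*} (V : Multiset α) (f : α → ℝ) (c : ℝ) :
    (V.map (fun v => f v - c)).sum = (V.map f).sum - (Multiset.card V : ℝ) * c := by
  induction V using Multiset.induction_on with
  | empty => simp
  | cons v V ih =>
      simp only [Multiset.map_cons, Multiset.sum_cons, ih, Multiset.card_cons]
      push_cast; ring

/-! ### Positions -/

noncomputable def cpos (t : ℝ) (c : EuclideanSpace ℝ (Fin d)) : EuclideanSpace ℝ (Fin d) := t⁻¹ • c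

noncomputable def pos1 (hd : 0 < d) (t : ℝ) (c : EuclideanSpace ℝ (Fin d)) : EuclideanSpace ℝ (Fin d) :=
  refl1 hd c - t^2 • e1 hd

noncomputable def pos2 (hd : 0 < d) (t : ℝ) (c : EuclideanSpace ℝ (Fin d)) : EuclideanSpace ℝ (Fin d) :=
  c + t^2 • e1 hd

noncomputable def Vbig (hd : 0 < d) (t : ℝ) (V : Multiset (EuclideanSpace ℝ (Fin d)))
    (U : EuclideanSpace ℝ (Fin d) × EuclideanSpace ℝ (Fin d)) : Multiset (EuclideanSpace ℝ (Fin d)) :=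
  V.map (cpos t) + {pos1 hd t U.1, pos2 hd t U.2}

lemma card_Vbig (hd : 0 < d) (t : ℝ) (V : Multiset (EuclideanSpace ℝ (Fin d))) (U) :
    Multiset.card (Vbig hd t V U) = Multiset.card V + 2 := by
  simp [Vbig]

lemma sumDist_Vbig (hd : 0 < d) (t : ℝ) (V : Multiset (EuclideanSpace ℝ (Fin d))) (U)
    (x : EuclideanSpace ℝ (Fin d)) :
    sumDist (Vbig hd t V U) x =
      (V.map (fun v => dist x (cpos t v))).sum + (dist x (pos1 hd t U.1) + dist x (pos2 hd t U.2)) := by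
  simp [sumDist, Vbig, Multiset.map_map, Function.comp]
  ring


/-! ### Assembly limit lemmas -/

variable (hd : 0 < d)

lemma copy2_tendsto (k : ℕ) (V : Multiset (EuclideanSpace ℝ (Fin d))) (hk : Multiset.card V = k)
    (U : EuclideanSpace ℝ (Fin d) × EuclideanSpace ℝ (Fin d)) (c : EuclideanSpace ℝ (Fin d)) :
    Tendsto (fun t => sumDist (Vbig hd t V U) (pos2 hd t c) - ((k:ℝ)+2)*t^2) atTop
      (nhds (Dhat hd k U (Sum.inr c))) := by
  have t1 : ∀ v : EuclideanSpace ℝ (Fin d),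
      Tendsto (fun t => dist (pos2 hd t c) (cpos t v) - t^2) atTop (nhds (c ⟨0,hd⟩)) := by
    intro v
    have hg : Tendsto (fun t : ℝ => c - t⁻¹ • v) atTop (nhds c) := by
      simpa using (tendsto_const_nhds (α := ℝ) (x := c)).sub (tendsto_inv_smul v)
    have h := tendsto_norm_add_smul hd c _ hg _ tendsto_sq_atTop
    apply h.congr
    intro t
    have hv : pos2 hd t c - cpos t v = (c - t⁻¹ • v) + t^2 • e1 hd := by
      simp only [pos2, cpos]; module
    rw [dist_eq_norm, hv]
  have t2 : Tendsto (fun t => dist (pos2 hd t c) (pos1 hd t U.1) - 2*t^2) atTop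
      (nhds (c ⟨0,hd⟩ + U.1 ⟨0,hd⟩)) := by
    have h := tendsto_norm_add_smul hd (c - refl1 hd U.1) (fun _ => c - refl1 hd U.1)
      tendsto_const_nhds (fun t => 2*t^2) (tendsto_sq_atTop.const_mul_atTop two_pos)
    have hco : (c - refl1 hd U.1) ⟨0,hd⟩ = c ⟨0,hd⟩ + U.1 ⟨0,hd⟩ := by
      have h7 : (c - refl1 hd U.1) ⟨0,hd⟩ = c ⟨0,hd⟩ - refl1 hd U.1 ⟨0,hd⟩ := rfl
      rw [h7, refl1_coord]; ring
    rw [hco] at h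
    apply h.congr
    intro t
    have hv : pos2 hd t c - pos1 hd t U.1 = (c - refl1 hd U.1) + (2*t^2) • e1 hd := by
      simp only [pos2, pos1]; module
    rw [dist_eq_norm, hv]
  have t3 : ∀ t : ℝ, dist (pos2 hd t c) (pos2 hd t U.2) = dist c U.2 := by
    intro t; simp only [pos2]; exact dist_add_right _ _ _
  have hsum := (tendsto_msum V _ (fun _ => c ⟨0,hd⟩) (fun v _ => t1 v)).add
    (t2.add (tendsto_const_nhds (α := ℝ) (x := dist c U.2)))
  have hfun : ∀ t : ℝ, sumDist (Vbig hd t V U) (pos2 hd t c) - ((k:ℝ)+2)*t^2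
      = (V.map (fun v => dist (pos2 hd t c) (cpos t v) - t^2)).sum
        + ((dist (pos2 hd t c) (pos1 hd t U.1) - 2*t^2) + dist c U.2) := by
    intro t
    rw [sumDist_Vbig, msum_map_sub_const, hk, t3 t]
    ring
  have hval : (V.map (fun _ => c ⟨0,hd⟩)).sum + ((c ⟨0,hd⟩ + U.1 ⟨0,hd⟩) + dist c U.2)
      = Dhat hd k U (Sum.inr c) := by
    rw [Multiset.map_const', Multiset.sum_replicate, hk]
    show (k : ℕ) • c ⟨0,hd⟩ + _ = _
    rw [nsmul_eq_mul]
    show _ = dist c U.2 + (((k:ℝ)+1) * c ⟨0,hd⟩ + U.1 ⟨0,hd⟩)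
    ring
  have hres := hsum.congr (fun t => (hfun t).symm)
  rwa [hval] at hres

lemma copy1_tendsto (k : ℕ) (V : Multiset (EuclideanSpace ℝ (Fin d))) (hk : Multiset.card V = k)
    (U : EuclideanSpace ℝ (Fin d) × EuclideanSpace ℝ (Fin d)) (c : EuclideanSpace ℝ (Fin d)) :
    Tendsto (fun t => sumDist (Vbig hd t V U) (pos1 hd t c) - ((k:ℝ)+2)*t^2) atTop
      (nhds (Dhat hd k U (Sum.inl c))) := by
  have t1 : ∀ v : EuclideanSpace ℝ (Fin d),
      Tendsto (fun t => dist (pos1 hd t c) (cpos t v) - t^2) atTop (nhds (c ⟨0,hd⟩)) := by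
    intro v
    have hg : Tendsto (fun t : ℝ => t⁻¹ • v - refl1 hd c) atTop (nhds (- refl1 hd c)) := by
      simpa using (tendsto_inv_smul v).sub (tendsto_const_nhds (α := ℝ) (x := refl1 hd c))
    have h := tendsto_norm_add_smul hd (- refl1 hd c) _ hg _ tendsto_sq_atTop
    have hco : (- refl1 hd c : EuclideanSpace ℝ (Fin d)) ⟨0,hd⟩ = c ⟨0,hd⟩ := by
      have h7 : (- refl1 hd c : EuclideanSpace ℝ (Fin d)) ⟨0,hd⟩ = - (refl1 hd c ⟨0,hd⟩) := rfl
      rw [h7, refl1_coord]; ring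
    rw [hco] at h
    apply h.congr
    intro t
    have hv : pos1 hd t c - cpos t v = -((t⁻¹ • v - refl1 hd c) + t^2 • e1 hd) := by
      simp only [pos1, cpos]; module
    rw [dist_eq_norm, hv, norm_neg]
  have t2 : Tendsto (fun t => dist (pos1 hd t c) (pos2 hd t U.2) - 2*t^2) atTop
      (nhds (c ⟨0,hd⟩ + U.2 ⟨0,hd⟩)) := by
    have h := tendsto_norm_add_smul hd (U.2 - refl1 hd c) (fun _ => U.2 - refl1 hd c)
      tendsto_const_nhds (fun t => 2*t^2) (tendsto_sq_atTop.const_mul_atTop two_pos)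
    have hco : (U.2 - refl1 hd c) ⟨0,hd⟩ = U.2 ⟨0,hd⟩ + c ⟨0,hd⟩ := by
      have h7 : (U.2 - refl1 hd c) ⟨0,hd⟩ = U.2 ⟨0,hd⟩ - refl1 hd c ⟨0,hd⟩ := rfl
      rw [h7, refl1_coord]; ring
    have hcomm : U.2 ⟨0,hd⟩ + c ⟨0,hd⟩ = c ⟨0,hd⟩ + U.2 ⟨0,hd⟩ := by ring
    rw [hco, hcomm] at h
    apply h.congr
    intro t
    have hv : pos1 hd t c - pos2 hd t U.2 = -((U.2 - refl1 hd c) + (2*t^2) • e1 hd) := by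
      simp only [pos1, pos2]; module
    rw [dist_eq_norm, hv, norm_neg]
  have t3 : ∀ t : ℝ, dist (pos1 hd t c) (pos1 hd t U.1) = dist c U.1 := by
    intro t
    simp only [pos1]
    rw [dist_sub_right]
    exact dist_refl1 hd c U.1
  have hsum := (tendsto_msum V _ (fun _ => c ⟨0,hd⟩) (fun v _ => t1 v)).add
    ((tendsto_const_nhds (α := ℝ) (x := dist c U.1)).add t2)
  have hfun : ∀ t : ℝ, sumDist (Vbig hd t V U) (pos1 hd t c) - ((k:ℝ)+2)*t^2
      = (V.map (fun v => dist (pos1 hd t c) (cpos t v) - t^2)).sum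
        + (dist c U.1 + (dist (pos1 hd t c) (pos2 hd t U.2) - 2*t^2)) := by
    intro t
    rw [sumDist_Vbig, msum_map_sub_const, hk, t3 t]
    ring
  have hval : (V.map (fun _ => c ⟨0,hd⟩)).sum + (dist c U.1 + (c ⟨0,hd⟩ + U.2 ⟨0,hd⟩))
      = Dhat hd k U (Sum.inl c) := by
    rw [Multiset.map_const', Multiset.sum_replicate, hk]
    show (k : ℕ) • c ⟨0,hd⟩ + _ = _
    rw [nsmul_eq_mul]
    show _ = dist c U.1 + (((k:ℝ)+1) * c ⟨0,hd⟩ + U.2 ⟨0,hd⟩)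
    ring
  have hres := hsum.congr (fun t => (hfun t).symm)
  rwa [hval] at hres

lemma cpart_tendsto (V : Multiset (EuclideanSpace ℝ (Fin d)))
    (U : EuclideanSpace ℝ (Fin d) × EuclideanSpace ℝ (Fin d)) (c : EuclideanSpace ℝ (Fin d)) :
    Tendsto (fun t => sumDist (Vbig hd t V U) (cpos t c) - 2*t^2) atTop
      (nhds ((V.map (fun _ => (0:ℝ))).sum + (U.1 ⟨0,hd⟩ + U.2 ⟨0,hd⟩))) := by
  have t1 : ∀ v : EuclideanSpace ℝ (Fin d),
      Tendsto (fun t => dist (cpos t c) (cpos t v)) atTop (nhds 0) := by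
    intro v
    have h := (tendsto_inv_smul (c - v)).norm
    rw [norm_zero] at h
    apply h.congr
    intro t
    have hv : (t⁻¹ • (c - v) : EuclideanSpace ℝ (Fin d)) = cpos t c - cpos t v := by
      simp only [cpos]; module
    rw [hv, dist_eq_norm]
  have t2 : Tendsto (fun t => dist (cpos t c) (pos1 hd t U.1) - t^2) atTop
      (nhds (U.1 ⟨0,hd⟩)) := by
    have hg : Tendsto (fun t : ℝ => t⁻¹ • c - refl1 hd U.1) atTop (nhds (- refl1 hd U.1)) := by
      simpa using (tendsto_inv_smul c).sub (tendsto_const_nhds (α := ℝ) (x := refl1 hd U.1))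
    have h := tendsto_norm_add_smul hd (- refl1 hd U.1) _ hg _ tendsto_sq_atTop
    have hco : (- refl1 hd U.1 : EuclideanSpace ℝ (Fin d)) ⟨0,hd⟩ = U.1 ⟨0,hd⟩ := by
      have h7 : (- refl1 hd U.1 : EuclideanSpace ℝ (Fin d)) ⟨0,hd⟩ = - (refl1 hd U.1 ⟨0,hd⟩) := rfl
      rw [h7, refl1_coord]; ring
    rw [hco] at h
    apply h.congr
    intro t
    have hv : cpos t c - pos1 hd t U.1 = (t⁻¹ • c - refl1 hd U.1) + t^2 • e1 hd := by
      simp only [cpos, pos1]; module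
    rw [dist_eq_norm, hv]
  have t3 : Tendsto (fun t => dist (cpos t c) (pos2 hd t U.2) - t^2) atTop
      (nhds (U.2 ⟨0,hd⟩)) := by
    have hg : Tendsto (fun t : ℝ => U.2 - t⁻¹ • c) atTop (nhds U.2) := by
      simpa using (tendsto_const_nhds (α := ℝ) (x := U.2)).sub (tendsto_inv_smul c)
    have h := tendsto_norm_add_smul hd U.2 _ hg _ tendsto_sq_atTop
    apply h.congr
    intro t
    have hv : cpos t c - pos2 hd t U.2 = -((U.2 - t⁻¹ • c) + t^2 • e1 hd) := by
      simp only [cpos, pos2]; module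
    rw [dist_eq_norm, hv, norm_neg]
  have hsum := (tendsto_msum V _ (fun _ => (0:ℝ)) (fun v _ => t1 v)).add (t2.add t3)
  have hfun : ∀ t : ℝ, sumDist (Vbig hd t V U) (cpos t c) - 2*t^2
      = (V.map (fun v => dist (cpos t c) (cpos t v))).sum
        + ((dist (cpos t c) (pos1 hd t U.1) - t^2) + (dist (cpos t c) (pos2 hd t U.2) - t^2)) := by
    intro t
    rw [sumDist_Vbig]
    ring
  exact hsum.congr (fun t => (hfun t).symm)

lemma cpart_pair_tendsto (V : Multiset (EuclideanSpace ℝ (Fin d)))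
    (U : EuclideanSpace ℝ (Fin d) × EuclideanSpace ℝ (Fin d)) (c c' : EuclideanSpace ℝ (Fin d)) :
    Tendsto (fun t => t * (sumDist (Vbig hd t V U) (cpos t c') - sumDist (Vbig hd t V U) (cpos t c)))
      atTop (nhds (sumDist V c' - sumDist V c)) := by
  have cross1 := tendsto_cross hd c' c (-(refl1 hd U.1))
  have cross2 := tendsto_cross hd (-c') (-c) U.2
  have hbase := (tendsto_const_nhds (α := ℝ) (x := sumDist V c' - sumDist V c)).add
    (cross1.add cross2)
  have hval : sumDist V c' - sumDist V c
      + ((c' ⟨0,hd⟩ - c ⟨0,hd⟩) + ((-c') ⟨0,hd⟩ - (-c) ⟨0,hd⟩)) = sumDist V c' - sumDist V c := by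
    have h1 : ((-c' : EuclideanSpace ℝ (Fin d))) ⟨0,hd⟩ = - (c' ⟨0,hd⟩) := rfl
    have h2 : ((-c : EuclideanSpace ℝ (Fin d))) ⟨0,hd⟩ = - (c ⟨0,hd⟩) := rfl
    rw [h1, h2]; ring
  rw [hval] at hbase
  apply hbase.congr'
  filter_upwards [eventually_gt_atTop (0:ℝ)] with t ht
  have htne : t ≠ 0 := ne_of_gt ht
  -- rewrite the multiset sums
  have hS : ∀ x : EuclideanSpace ℝ (Fin d),
      (V.map (fun v => dist (cpos t x) (cpos t v))).sum = t⁻¹ * sumDist V x := by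
    intro x
    have h1 : ∀ v : EuclideanSpace ℝ (Fin d), dist (cpos t x) (cpos t v) = t⁻¹ * dist x v := by
      intro v
      simp only [cpos]
      rw [dist_smul₀, Real.norm_eq_abs, abs_of_pos (by positivity)]
    calc (V.map (fun v => dist (cpos t x) (cpos t v))).sum
        = (V.map (fun v => t⁻¹ * dist x v)).sum := by
          congr 1; exact Multiset.map_congr rfl (fun v _ => h1 v)
      _ = t⁻¹ * (V.map (fun v => dist x v)).sum := by
          rw [← Multiset.sum_map_mul_left]
      _ = t⁻¹ * sumDist V x := rfl
  have hp1 : ∀ x : EuclideanSpace ℝ (Fin d), dist (cpos t x) (pos1 hd t U.1)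
      = ‖t⁻¹ • x + -(refl1 hd U.1) + t^2 • e1 hd‖ := by
    intro x
    rw [dist_eq_norm]
    congr 1
    simp only [cpos, pos1]; module
  have hp2 : ∀ x : EuclideanSpace ℝ (Fin d), dist (cpos t x) (pos2 hd t U.2)
      = ‖t⁻¹ • (-x) + U.2 + t^2 • e1 hd‖ := by
    intro x
    rw [dist_eq_norm, show cpos t x - pos2 hd t U.2 = -(t⁻¹ • (-x) + U.2 + t^2 • e1 hd) by
      simp only [cpos, pos2]; module, norm_neg]
  rw [sumDist_Vbig, sumDist_Vbig, hS, hS, hp1, hp1, hp2, hp2]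
  field_simp
  ring


/-! ### Coordinates of positions -/

lemma cpos_coord (t : ℝ) (c : EuclideanSpace ℝ (Fin d)) :
    cpos t c ⟨0,hd⟩ = t⁻¹ * c ⟨0,hd⟩ := rfl

lemma pos1_coord (t : ℝ) (c : EuclideanSpace ℝ (Fin d)) :
    pos1 hd t c ⟨0,hd⟩ = - c ⟨0,hd⟩ - t^2 := by
  have h : pos1 hd t c ⟨0,hd⟩ = refl1 hd c ⟨0,hd⟩ - t^2 * e1 hd ⟨0,hd⟩ := rfl
  rw [h, refl1_coord, e1_apply]; ring

lemma pos2_coord (t : ℝ) (c : EuclideanSpace ℝ (Fin d)) :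
    pos2 hd t c ⟨0,hd⟩ = c ⟨0,hd⟩ + t^2 := by
  have h : pos2 hd t c ⟨0,hd⟩ = c ⟨0,hd⟩ + t^2 * e1 hd ⟨0,hd⟩ := rfl
  rw [h, e1_apply]; ring

/-! ### Counting helpers -/

lemma eventually_ball_finset {α β : Type*} {l : Filter β} (s : Finset α) (p : α → β → Prop)
    (h : ∀ a ∈ s, ∀ᶠ t in l, p a t) : ∀ᶠ t in l, ∀ a ∈ s, p a t := by
  have h2 : ∀ᶠ t in l, ∀ a ∈ (↑s : Set α), p a t :=
    (Filter.eventually_all_finite s.finite_toSet).2 (fun a ha => h a (by simpa using ha))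
  exact h2.mono (fun t ht a ha => ht a (by simpa using ha))

lemma psiSet_card_congr {n₁ n₂ : ℕ} (h : n₁ = n₂) (k : ℕ) (C : Finset (EuclideanSpace ℝ (Fin d))) :
    Nat.card (PsiSet k n₁ C) = Nat.card (PsiSet k n₂ C) := by subst h; rfl

lemma finite_PsiSet (k n : ℕ) (C : Finset (EuclideanSpace ℝ (Fin d))) :
    (PsiSet k n C).Finite := by
  have hfin : (Set.univ.pi (fun _ : Fin n => (↑C : Set (EuclideanSpace ℝ (Fin d))))).Finite :=
    Set.Finite.pi (fun _ => C.finite_toSet)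
  apply hfin.subset
  intro σ hσ
  rw [Set.mem_pi]
  exact fun i _ => hσ.2.1 i

lemma finite_PsiHatSet (k n : ℕ) (C₁ C₂ : Finset (EuclideanSpace ℝ (Fin d))) :
    (PsiHatSet hd k n C₁ C₂).Finite := by
  have hfin : (Set.univ.pi (fun _ : Fin n =>
      (Sum.inl '' ↑C₁ ∪ Sum.inr '' ↑C₂ :
        Set (EuclideanSpace ℝ (Fin d) ⊕ EuclideanSpace ℝ (Fin d))))).Finite :=
    Set.Finite.pi (fun _ => (C₁.finite_toSet.image _).union (C₂.finite_toSet.image _))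
  apply hfin.subset
  intro σ hσ
  rw [Set.mem_pi]
  intro i _
  have hmem := hσ.2.1 i
  rcases hx : σ i with c | c
  · rw [hx] at hmem
    exact Or.inl ⟨c, by simpa using hmem, rfl⟩
  · rw [hx] at hmem
    exact Or.inr ⟨c, by simpa using hmem, rfl⟩

lemma psiCount_le (k : ℕ) (C : Finset (EuclideanSpace ℝ (Fin d))) :
    psiCount k C ≤ C.card ^ C.card := by
  classical
  have hinj : Function.Injective
      (fun σ : ↥(PsiSet k C.card C) => (fun i => (⟨σ.1 i, σ.2.2.1 i⟩ : {x // x ∈ C}))) := by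
    intro σ τ h
    apply Subtype.ext
    funext i
    have := congrFun h i
    exact congrArg Subtype.val this
  have hle := Nat.card_le_card_of_injective _ hinj
  calc psiCount k C ≤ Nat.card (Fin C.card → {x // x ∈ C}) := hle
    _ = C.card ^ C.card := by
        rw [Nat.card_eq_fintype_card, Fintype.card_fun]
        simp

lemma exists_finset_card (hd : 0 < d) (n : ℕ) : ∃ C : Finset (EuclideanSpace ℝ (Fin d)), C.card = n := by
  classical
  have hinj : Function.Injective (fun j : ℕ => ((j : ℝ) • e1 hd : EuclideanSpace ℝ (Fin d))) := by
    intro a b h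
    have h0 : ((a : ℝ) • e1 hd : EuclideanSpace ℝ (Fin d)) ⟨0,hd⟩
        = ((b : ℝ) • e1 hd : EuclideanSpace ℝ (Fin d)) ⟨0,hd⟩ := by
      have h' : ((a : ℝ) • e1 hd : EuclideanSpace ℝ (Fin d)) = (b : ℝ) • e1 hd := h
      rw [h']
    have ha : ((a : ℝ) • e1 hd : EuclideanSpace ℝ (Fin d)) ⟨0,hd⟩ = (a : ℝ) := by
      have : ((a : ℝ) • e1 hd : EuclideanSpace ℝ (Fin d)) ⟨0,hd⟩ = (a:ℝ) * e1 hd ⟨0,hd⟩ := rfl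
      rw [this, e1_apply]; ring
    have hb : ((b : ℝ) • e1 hd : EuclideanSpace ℝ (Fin d)) ⟨0,hd⟩ = (b : ℝ) := by
      have : ((b : ℝ) • e1 hd : EuclideanSpace ℝ (Fin d)) ⟨0,hd⟩ = (b:ℝ) * e1 hd ⟨0,hd⟩ := rfl
      rw [this, e1_apply]; ring
    rw [ha, hb] at h0
    exact Nat.cast_injective (R := ℝ) h0
  refine ⟨(Finset.range n).map ⟨_, hinj⟩, ?_⟩
  rw [Finset.card_map, Finset.card_range]

end PsiAuxProof

open PsiAuxProof in
/-- For `d ≥ 1`, `k ≥ 0`, `m ≥ 0` (with `m = 0` if `k = 0`) and finite sets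
`Ĉ_1, Ĉ_2 ⊆ ℝ^d`, we have `ψ^max_{d,k+2}(m + |Ĉ_1| + |Ĉ_2|) ≥ ψ̂_k(Ĉ_1, Ĉ_2) · ψ^max_{d,k}(m)`. -/
theorem psiMax_add_two_ge (d k m : ℕ) (hd : 1 ≤ d) (hkm : k = 0 → m = 0)
    (C₁ C₂ : Finset (EuclideanSpace ℝ (Fin d))) :
    psiHat hd k C₁ C₂ * psiMax d k m ≤ psiMax d (k + 2) (m + C₁.card + C₂.card) := by
  classical
  -- boundedness of the psiCount value sets
  have hbdd : ∀ (k₀ n₀ : ℕ), BddAbove {x | ∃ C : Finset (EuclideanSpace ℝ (Fin d)),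
      C.card = n₀ ∧ psiCount k₀ C = x} := by
    intro k₀ n₀
    refine ⟨n₀ ^ n₀, ?_⟩
    rintro x ⟨C, hC, rfl⟩
    have h := psiCount_le k₀ C
    rwa [hC] at h
  -- a maximizer for `psiMax d k m`
  have hne : {x | ∃ C : Finset (EuclideanSpace ℝ (Fin d)),
      C.card = m ∧ psiCount k C = x}.Nonempty := by
    obtain ⟨C, hC⟩ := exists_finset_card (show 0 < d from hd) m
    exact ⟨psiCount k C, C, hC, rfl⟩
  obtain ⟨C₀, hC₀card, hC₀⟩ := Nat.sSup_mem hne (hbdd k m)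
  rw [show psiMax d k m = psiCount k C₀ from hC₀.symm]
  subst hC₀card
  set n' := C₁.card + C₂.card with hn'
  set N := C₀.card + C₁.card + C₂.card with hN
  set PsiH := PsiHatSet hd k n' C₁ C₂ with hPsiH
  set Psi := PsiSet k C₀.card C₀ with hPsi
  have hPsiHfin : PsiH.Finite := finite_PsiHatSet hd k n' C₁ C₂
  have hPsifin : Psi.Finite := finite_PsiSet k C₀.card C₀
  haveI := hPsiHfin.to_subtype
  haveI := hPsifin.to_subtype
  choose U hU using fun σh : ↥PsiH => σh.2.2.2
  choose Vw hVcard hVinjOn hVmono using fun σ : ↥Psi => σ.2.2.2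
  -- the copy-limit lemma, uniform over the disjoint union
  have hcopy : ∀ (σh : ↥PsiH) (σ : ↥Psi)
      (x : EuclideanSpace ℝ (Fin d) ⊕ EuclideanSpace ℝ (Fin d)),
      Filter.Tendsto (fun t => sumDist (Vbig hd t (Vw σ) (U σh))
          (Sum.elim (pos1 hd t) (pos2 hd t) x) - ((k:ℝ)+2)*t^2)
        Filter.atTop (nhds (Dhat hd k (U σh) x)) := by
    intro σh σ x
    rcases x with c | c
    · simpa using copy1_tendsto hd k (Vw σ) (hVcard σ) (U σh) c
    · simpa using copy2_tendsto hd k (Vw σ) (hVcard σ) (U σh) c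
  -- eventual order conditions, per pair
  have hEv : ∀ p : ↥PsiH × ↥Psi, ∀ᶠ t in Filter.atTop,
      (∀ j j' : Fin C₀.card, j < j' →
        sumDist (Vbig hd t (Vw p.2) (U p.1)) (cpos t (p.2.1 j))
          < sumDist (Vbig hd t (Vw p.2) (U p.1)) (cpos t (p.2.1 j'))) ∧
      (∀ j : Fin C₀.card, ∀ l : Fin n',
        sumDist (Vbig hd t (Vw p.2) (U p.1)) (cpos t (p.2.1 j))
          < sumDist (Vbig hd t (Vw p.2) (U p.1)) (Sum.elim (pos1 hd t) (pos2 hd t) (p.1.1 l))) ∧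
      (∀ l l' : Fin n', l < l' →
        sumDist (Vbig hd t (Vw p.2) (U p.1)) (Sum.elim (pos1 hd t) (pos2 hd t) (p.1.1 l))
          < sumDist (Vbig hd t (Vw p.2) (U p.1)) (Sum.elim (pos1 hd t) (pos2 hd t) (p.1.1 l'))) := by
    rintro ⟨σh, σ⟩
    refine Filter.Eventually.and ?_ (Filter.Eventually.and ?_ ?_)
    · rw [Filter.eventually_all]; intro j
      rw [Filter.eventually_all]; intro j'
      by_cases hjj : j < j'
      · have hgap : (0:ℝ) < sumDist (Vw σ) (σ.1 j') - sumDist (Vw σ) (σ.1 j) :=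
          sub_pos.2 (hVmono σ hjj)
        have htt := cpart_pair_tendsto hd (Vw σ) (U σh) (σ.1 j) (σ.1 j')
        have hev := htt.eventually_const_lt hgap
        filter_upwards [hev, Filter.eventually_gt_atTop (0:ℝ)] with t h1 h2
        intro _
        nlinarith [h1, h2]
      · exact Filter.Eventually.of_forall (fun t h => absurd h hjj)
    · rw [Filter.eventually_all]; intro j
      rw [Filter.eventually_all]; intro l
      have hk0 : k ≠ 0 := by
        intro h0
        have h1 := hkm h0
        have h2 := j.2
        omega
      have hkpos : (0:ℝ) < (k:ℝ) := by exact_mod_cast Nat.pos_of_ne_zero hk0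
      have h1 := hcopy σh σ (σh.1 l)
      have h2 := cpart_tendsto hd (Vw σ) (U σh) (σ.1 j)
      have h3 := h1.sub h2
      have h4 : Filter.Tendsto (fun s : ℝ => (k:ℝ)*s^2) Filter.atTop Filter.atTop :=
        tendsto_sq_atTop.const_mul_atTop hkpos
      set L : ℝ := Dhat hd k (U σh) (σh.1 l)
        - (((Vw σ).map (fun _ => (0:ℝ))).sum + ((U σh).1 ⟨0,hd⟩ + (U σh).2 ⟨0,hd⟩)) with hL
      filter_upwards [h3.eventually_const_lt (show L - 1 < L by linarith),
        h4.eventually_gt_atTop (1 - L)] with t ha hb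
      have hid : ((k:ℝ)+2)*t^2 - 2*t^2 = (k:ℝ)*t^2 := by ring
      linarith [ha, hb, hid]
    · rw [Filter.eventually_all]; intro l
      rw [Filter.eventually_all]; intro l'
      by_cases hll : l < l'
      · have hgap : Dhat hd k (U σh) (σh.1 l) < Dhat hd k (U σh) (σh.1 l') := hU σh hll
        have hev := (hcopy σh σ (σh.1 l)).eventually_lt (hcopy σh σ (σh.1 l')) hgap
        filter_upwards [hev] with t h1
        intro _
        linarith
      · exact Filter.Eventually.of_forall (fun t h => absurd h hll)
  have hEvAll : ∀ᶠ t in Filter.atTop, ∀ p : ↥PsiH × ↥Psi,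
      (∀ j j' : Fin C₀.card, j < j' →
        sumDist (Vbig hd t (Vw p.2) (U p.1)) (cpos t (p.2.1 j))
          < sumDist (Vbig hd t (Vw p.2) (U p.1)) (cpos t (p.2.1 j'))) ∧
      (∀ j : Fin C₀.card, ∀ l : Fin n',
        sumDist (Vbig hd t (Vw p.2) (U p.1)) (cpos t (p.2.1 j))
          < sumDist (Vbig hd t (Vw p.2) (U p.1)) (Sum.elim (pos1 hd t) (pos2 hd t) (p.1.1 l))) ∧
      (∀ l l' : Fin n', l < l' →
        sumDist (Vbig hd t (Vw p.2) (U p.1)) (Sum.elim (pos1 hd t) (pos2 hd t) (p.1.1 l))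
          < sumDist (Vbig hd t (Vw p.2) (U p.1)) (Sum.elim (pos1 hd t) (pos2 hd t) (p.1.1 l'))) :=
    Filter.eventually_all.2 hEv
  -- eventual distinctness of the three clusters
  have hED1 : ∀ᶠ t : ℝ in Filter.atTop, ∀ c ∈ C₀, ∀ c1 ∈ C₁, cpos t c ≠ pos1 hd t c1 := by
    apply eventually_ball_finset; intro c _
    apply eventually_ball_finset; intro c1 _
    have hten : Filter.Tendsto (fun t : ℝ => (t⁻¹ * c ⟨0,hd⟩ + t^2) + c1 ⟨0,hd⟩)
        Filter.atTop Filter.atTop :=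
      Filter.tendsto_atTop_add_const_right _ _
        ((tendsto_inv_atTop_zero.mul_const (c ⟨0,hd⟩)).add_atTop tendsto_sq_atTop)
    filter_upwards [hten.eventually_gt_atTop 0] with t ht heq
    have h0 : cpos t c ⟨0,hd⟩ = pos1 hd t c1 ⟨0,hd⟩ := by rw [heq]
    rw [cpos_coord, pos1_coord] at h0
    linarith
  have hED2 : ∀ᶠ t : ℝ in Filter.atTop, ∀ c ∈ C₀, ∀ c2 ∈ C₂, cpos t c ≠ pos2 hd t c2 := by
    apply eventually_ball_finset; intro c _
    apply eventually_ball_finset; intro c2 _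
    have hten : Filter.Tendsto (fun t : ℝ => (t⁻¹ * (-(c ⟨0,hd⟩)) + t^2) + c2 ⟨0,hd⟩)
        Filter.atTop Filter.atTop :=
      Filter.tendsto_atTop_add_const_right _ _
        ((tendsto_inv_atTop_zero.mul_const (-(c ⟨0,hd⟩))).add_atTop tendsto_sq_atTop)
    filter_upwards [hten.eventually_gt_atTop 0] with t ht heq
    have h0 : cpos t c ⟨0,hd⟩ = pos2 hd t c2 ⟨0,hd⟩ := by rw [heq]
    rw [cpos_coord, pos2_coord] at h0
    have hr : t⁻¹ * (-(c ⟨0,hd⟩)) = -(t⁻¹ * c ⟨0,hd⟩) := by ring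
    linarith
  have hED3 : ∀ᶠ t : ℝ in Filter.atTop, ∀ c1 ∈ C₁, ∀ c2 ∈ C₂, pos1 hd t c1 ≠ pos2 hd t c2 := by
    apply eventually_ball_finset; intro c1 _
    apply eventually_ball_finset; intro c2 _
    have hten : Filter.Tendsto (fun t : ℝ => (2*t^2 + c1 ⟨0,hd⟩) + c2 ⟨0,hd⟩)
        Filter.atTop Filter.atTop :=
      Filter.tendsto_atTop_add_const_right _ _
        (Filter.tendsto_atTop_add_const_right _ _ (tendsto_sq_atTop.const_mul_atTop two_pos))
    filter_upwards [hten.eventually_gt_atTop 0] with t ht heq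
    have h0 : pos1 hd t c1 ⟨0,hd⟩ = pos2 hd t c2 ⟨0,hd⟩ := by rw [heq]
    rw [pos1_coord, pos2_coord] at h0
    linarith
  -- pick a good parameter t
  obtain ⟨t, hOrd, hD1, hD2, hD3, ht0⟩ :=
    (hEvAll.and (hED1.and (hED2.and (hED3.and (Filter.eventually_gt_atTop (0:ℝ)))))).exists
  have htne : t ≠ 0 := ne_of_gt ht0
  have hcposinj : Function.Injective (cpos (d := d) t) :=
    fun x y h => smul_right_injective _ (inv_ne_zero htne) h
  have hpos1inj : Function.Injective (pos1 hd t) :=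
    fun x y h => refl1_injective hd (sub_left_inj.mp h)
  have hpos2inj : Function.Injective (pos2 hd t) :=
    fun x y h => by
      have h2 : x + t^2 • e1 hd = y + t^2 • e1 hd := h
      exact add_right_cancel h2
  set C' := (C₀.image (cpos t) ∪ C₁.image (pos1 hd t)) ∪ C₂.image (pos2 hd t) with hC'
  have hdisj1 : Disjoint (C₀.image (cpos t)) (C₁.image (pos1 hd t)) := by
    rw [Finset.disjoint_left]
    rintro x hx hx'
    obtain ⟨c, hc, rfl⟩ := Finset.mem_image.mp hx
    obtain ⟨c1, hc1, heq⟩ := Finset.mem_image.mp hx'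
    exact hD1 c hc c1 hc1 heq.symm
  have hdisj2 : Disjoint (C₀.image (cpos t) ∪ C₁.image (pos1 hd t)) (C₂.image (pos2 hd t)) := by
    rw [Finset.disjoint_left]
    rintro x hx hx'
    obtain ⟨c2, hc2, heq'⟩ := Finset.mem_image.mp hx'
    rcases Finset.mem_union.mp hx with hx | hx
    · obtain ⟨c, hc, rfl⟩ := Finset.mem_image.mp hx
      exact hD2 c hc c2 hc2 heq'.symm
    · obtain ⟨c1, hc1, rfl⟩ := Finset.mem_image.mp hx
      exact hD3 c1 hc1 c2 hc2 heq'.symm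
  have hcard : C'.card = N := by
    rw [hC', Finset.card_union_of_disjoint hdisj2, Finset.card_union_of_disjoint hdisj1,
      Finset.card_image_of_injective _ hcposinj, Finset.card_image_of_injective _ hpos1inj,
      Finset.card_image_of_injective _ hpos2inj]
  have hassoc : N = C₀.card + n' := by rw [hN, hn']; omega
  set PsiT := PsiSet (k+2) N C' with hPsiT
  set bld : ↥PsiH × ↥Psi → (Fin N → EuclideanSpace ℝ (Fin d)) := fun p i =>
    Fin.addCases (motive := fun _ => EuclideanSpace ℝ (Fin d))
      (fun j => cpos t (p.2.1 j)) (fun l => Sum.elim (pos1 hd t) (pos2 hd t) (p.1.1 l))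
      (Fin.cast hassoc i) with hbld
  have hbld_mono : ∀ p : ↥PsiH × ↥Psi,
      StrictMono (fun i => sumDist (Vbig hd t (Vw p.2) (U p.1)) (bld p i)) := by
    rintro ⟨σh, σ⟩
    obtain ⟨hA, hB, hC⟩ := hOrd (σh, σ)
    have key : ∀ i' j' : Fin (C₀.card + n'), i' < j' →
        sumDist (Vbig hd t (Vw σ) (U σh))
          (Fin.addCases (motive := fun _ => EuclideanSpace ℝ (Fin d))
            (fun j => cpos t (σ.1 j)) (fun l => Sum.elim (pos1 hd t) (pos2 hd t) (σh.1 l)) i')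
        < sumDist (Vbig hd t (Vw σ) (U σh))
          (Fin.addCases (motive := fun _ => EuclideanSpace ℝ (Fin d))
            (fun j => cpos t (σ.1 j)) (fun l => Sum.elim (pos1 hd t) (pos2 hd t) (σh.1 l)) j') := by
      intro i' j'
      induction i' using Fin.addCases with
      | left ji =>
        induction j' using Fin.addCases with
        | left jj =>
          intro hlt
          rw [Fin.addCases_left, Fin.addCases_left]
          refine hA ji jj ?_
          have h1 : (ji : ℕ) < (jj : ℕ) := by
            have := (Fin.lt_def).mp hlt
            simpa using this
          exact h1
        | right lj =>
          intro _
          rw [Fin.addCases_left, Fin.addCases_right]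
          exact hB ji lj
      | right li =>
        induction j' using Fin.addCases with
        | left jj =>
          intro hlt
          exfalso
          have h1 := (Fin.lt_def).mp hlt
          simp only [Fin.coe_natAdd, Fin.coe_castAdd] at h1
          have := jj.2
          omega
        | right lj =>
          intro hlt
          rw [Fin.addCases_right, Fin.addCases_right]
          refine hC li lj ?_
          have h1 := (Fin.lt_def).mp hlt
          simp only [Fin.coe_natAdd] at h1
          exact (Fin.lt_def).mpr (by omega)
    intro i j hij
    refine key _ _ ?_
    have h1 : (i:ℕ) < (j:ℕ) := (Fin.lt_def).mp hij
    exact (Fin.lt_def).mpr (by simp only [Fin.coe_cast]; exact h1)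
  have hbld_inj : ∀ p : ↥PsiH × ↥Psi, Function.Injective (bld p) := by
    intro p i j h
    by_contra hne
    rcases Ne.lt_or_gt hne with hlt | hlt
    · exact (hbld_mono p hlt).ne (congrArg (sumDist (Vbig hd t (Vw p.2) (U p.1))) h)
    · exact (hbld_mono p hlt).ne (congrArg (sumDist (Vbig hd t (Vw p.2) (U p.1))) h).symm
  have hbld_mem : ∀ p : ↥PsiH × ↥Psi, ∀ i, bld p i ∈ C' := by
    intro p i
    rw [hbld]
    refine Fin.addCases (motive := fun x =>
      Fin.addCases (motive := fun _ => EuclideanSpace ℝ (Fin d))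
        (fun j => cpos t (p.2.1 j)) (fun l => Sum.elim (pos1 hd t) (pos2 hd t) (p.1.1 l)) x ∈ C')
      ?_ ?_ (Fin.cast hassoc i)
    · intro j
      rw [Fin.addCases_left]
      exact Finset.mem_union_left _
        (Finset.mem_union_left _ (Finset.mem_image_of_mem _ (p.2.2.2.1 j)))
    · intro l
      rw [Fin.addCases_right]
      have hmem := p.1.2.2.1 l
      rcases hx : p.1.1 l with c | c
      · rw [hx] at hmem
        simp only [Sum.elim_inl] at hmem
        simp only [Sum.elim_inl]
        exact Finset.mem_union_left _
          (Finset.mem_union_right _ (Finset.mem_image_of_mem _ hmem))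
      · rw [hx] at hmem
        simp only [Sum.elim_inr] at hmem
        simp only [Sum.elim_inr]
        exact Finset.mem_union_right _ (Finset.mem_image_of_mem _ hmem)
  have hbld_inPsiT : ∀ p : ↥PsiH × ↥Psi, bld p ∈ PsiT := by
    intro p
    refine ⟨hbld_inj p, hbld_mem p, Vbig hd t (Vw p.2) (U p.1), ?_, ?_, hbld_mono p⟩
    · rw [card_Vbig, hVcard]
    · have himg : Finset.image (bld p) Finset.univ = C' := by
        apply Finset.eq_of_subset_of_card_le
        · intro x hx
          obtain ⟨i, _, rfl⟩ := Finset.mem_image.mp hx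
          exact hbld_mem p i
        · rw [Finset.card_image_of_injective _ (hbld_inj p), Finset.card_univ,
            Fintype.card_fin, hcard]
      intro x hx y hy hxy
      have hx' : x ∈ Finset.image (bld p) Finset.univ := by
        rw [himg]; exact hx
      have hy' : y ∈ Finset.image (bld p) Finset.univ := by
        rw [himg]; exact hy
      obtain ⟨i, _, rfl⟩ := Finset.mem_image.mp hx'
      obtain ⟨j, _, rfl⟩ := Finset.mem_image.mp hy'
      exact congrArg (bld p) ((hbld_mono p).injective hxy)
  have hΦinj : Function.Injective
      (fun p : ↥PsiH × ↥Psi => (⟨bld p, hbld_inPsiT p⟩ : ↥PsiT)) := by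
    intro p q h
    have hfun : bld p = bld q := congrArg Subtype.val h
    have hredL : ∀ (r : ↥PsiH × ↥Psi) (j : Fin C₀.card),
        bld r (Fin.cast hassoc.symm (Fin.castAdd n' j)) = cpos t (r.2.1 j) := by
      intro r j
      simp only [hbld]
      have hcast : Fin.cast hassoc (Fin.cast hassoc.symm (Fin.castAdd n' j))
          = Fin.castAdd n' j := by ext; simp
      rw [hcast, Fin.addCases_left]
    have hredR : ∀ (r : ↥PsiH × ↥Psi) (l : Fin n'),
        bld r (Fin.cast hassoc.symm (Fin.natAdd C₀.card l))
          = Sum.elim (pos1 hd t) (pos2 hd t) (r.1.1 l) := by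
      intro r l
      simp only [hbld]
      have hcast : Fin.cast hassoc (Fin.cast hassoc.symm (Fin.natAdd C₀.card l))
          = Fin.natAdd C₀.card l := by ext; simp
      rw [hcast, Fin.addCases_right]
    have hσ : p.2 = q.2 := by
      apply Subtype.ext
      funext j
      have hi := congrFun hfun (Fin.cast hassoc.symm (Fin.castAdd n' j))
      rw [hredL p, hredL q] at hi
      exact hcposinj hi
    have hσh : p.1 = q.1 := by
      apply Subtype.ext
      funext l
      have hi := congrFun hfun (Fin.cast hassoc.symm (Fin.natAdd C₀.card l))
      rw [hredR p, hredR q] at hi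
      have hmp := p.1.2.2.1 l
      have hmq := q.1.2.2.1 l
      rcases hxp : p.1.1 l with c | c <;> rcases hxq : q.1.1 l with c' | c' <;>
        rw [hxp, hxq] at hi <;> simp only [Sum.elim_inl, Sum.elim_inr] at hi
      · exact congrArg Sum.inl (hpos1inj hi)
      · rw [hxp] at hmp
        rw [hxq] at hmq
        simp only [Sum.elim_inl, Sum.elim_inr] at hmp hmq
        exact absurd hi (hD3 c hmp c' hmq)
      · rw [hxp] at hmp
        rw [hxq] at hmq
        simp only [Sum.elim_inl, Sum.elim_inr] at hmp hmq
        exact absurd hi.symm (hD3 c' hmq c hmp)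
      · exact congrArg Sum.inr (hpos2inj hi)
    exact Prod.ext hσh hσ
  have hfinT : (PsiT : Set (Fin N → EuclideanSpace ℝ (Fin d))).Finite :=
    finite_PsiSet (k+2) N C'
  haveI := hfinT.to_subtype
  calc psiHat hd k C₁ C₂ * psiCount k C₀
      = Nat.card ↥PsiH * Nat.card ↥Psi := rfl
    _ = Nat.card (↥PsiH × ↥Psi) := (Nat.card_prod _ _).symm
    _ ≤ Nat.card ↥PsiT := Nat.card_le_card_of_injective _ hΦinj
    _ = psiCount (k+2) C' := (psiSet_card_congr hcard (k+2) C').symm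
    _ ≤ psiMax d (k+2) N := le_csSup (hbdd (k+2) N) ⟨C', hcard, rfl⟩
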